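/- arXiv:1710.01281 — 5 statements merged into one kernel-verified Lean document; each statement's English description precedes it below -/
import Mathlib

section
/- Let F be the Minkowski gauge of an open bounded convex set B containing 0, and let F̃ be the gauge of B + v where -v ∈ B. Then for every nonzero ξ, F̃(ξ) is the unique positive real t satisfying F(ξ - t·v) = t. -/
open Set Pointwise

/-- let `F` be the gauge of an open bounded convex body `B ∋ 0`
and `F̃` the gauge of the translate `B + v`, for `-v ∈ B`. Then for each
nonzero `ξ`, `F̃ ξ` is the unique positive real `t` with `F (ξ - t • v) = t`. -/
theorem gauge_translate_satisfies_zermelo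
    {V : Type*} [NormedAddCommGroup V] [NormedSpace ℝ V] [FiniteDimensional ℝ V]
    (B : Set V) (v : V)
    (hopen : IsOpen B) (hbdd : Bornology.IsBounded B) (hconv : Convex ℝ B)
    (h0 : (0 : V) ∈ B) (hv : -v ∈ B) :
    ∀ ξ : V, ξ ≠ 0 →
      0 < gauge ((fun x => x + v) '' B) ξ ∧
      gauge B (ξ - gauge ((fun x => x + v) '' B) ξ • v) = gauge ((fun x => x + v) '' B) ξ ∧
      (∀ t : ℝ, 0 < t → gauge B (ξ - t • v) = t → t = gauge ((fun x => x + v) '' B) ξ) := by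
  intro ξ hξ
  set B' : Set V := (fun x => x + v) '' B with hB'def
  -- basic properties of B'
  have hB'eq : B' = (fun x => v + x) '' B := by
    simp only [hB'def]; exact image_congr fun x _ => add_comm x v
  have hB'open : IsOpen B' := (isOpenMap_add_right v) B hopen
  have hB'conv : Convex ℝ B' := hB'eq ▸ hconv.translate v
  have hB'0 : (0 : V) ∈ B' := ⟨-v, hv, neg_add_cancel v⟩
  have hB'abs : Absorbent ℝ B' := absorbent_nhds_zero (hB'open.mem_nhds hB'0)
  have hBabs : Absorbent ℝ B := absorbent_nhds_zero (hopen.mem_nhds h0)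
  have hB'bdd : Bornology.IsBounded B' := by
    have : B' ⊆ B + {v} := by
      rintro x ⟨a, ha, rfl⟩
      exact Set.add_mem_add ha rfl
    exact (hbdd.add Bornology.isBounded_singleton).subset this
  -- membership characterization via gauge
  have memiff : ∀ (s : Set V), IsOpen s → Convex ℝ s → (0 : V) ∈ s →
      ∀ (t : ℝ), 0 < t → ∀ x : V, (gauge s x < t ↔ x ∈ t • s) := by
    intro s hso hsc hs0 t ht x
    have hmem : t⁻¹ • x ∈ s ↔ gauge s (t⁻¹ • x) < 1 :=
      (Set.ext_iff.1 (gauge_lt_one_eq_self_of_isOpen hsc hs0 hso) (t⁻¹ • x)).symm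
    rw [mem_smul_set_iff_inv_smul_mem₀ ht.ne' s x, hmem,
      gauge_smul_of_nonneg (inv_nonneg.2 ht.le), smul_eq_mul,
      inv_mul_lt_iff₀ ht, mul_one]
  -- membership translation
  have memtrans : ∀ (t : ℝ), ∀ x : V, x ∈ t • B' ↔ x - t • v ∈ t • B := by
    intro t x
    constructor
    · rintro ⟨_, ⟨a, ha, rfl⟩, rfl⟩
      refine ⟨a, ha, ?_⟩
      show t • a = t • (a + v) - t • v
      rw [smul_add]; abel
    · rintro ⟨a, ha, hax⟩
      refine ⟨a + v, ⟨a, ha, rfl⟩, ?_⟩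
      show t • (a + v) = x
      rw [smul_add, show t • a = x - t • v from hax]; abel
  set t₀ : ℝ := gauge B' ξ with ht₀def
  -- positivity
  have ht₀pos : 0 < t₀ := by
    obtain ⟨R, hRpos, hsub⟩ := hB'bdd.subset_ball_lt 0 0
    have h1 : gauge (Metric.ball (0 : V) R) ξ ≤ t₀ := gauge_mono hB'abs hsub ξ
    have h2 : gauge (Metric.ball (0 : V) R) ξ = ‖ξ‖ / R := gauge_ball hRpos.le ξ
    have : 0 < ‖ξ‖ / R := div_pos (norm_pos_iff.2 hξ) hRpos
    linarith
  -- the key equation, ≤ direction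
  have hle : gauge B (ξ - t₀ • v) ≤ t₀ := by
    have hc0 : 0 ≤ gauge B v := gauge_nonneg v
    refine le_of_forall_pos_le_add fun ε hε => ?_
    have hcpos : (0:ℝ) < 1 + gauge B v := by linarith
    obtain ⟨t, htdef⟩ : ∃ t : ℝ, t = t₀ + ε / (1 + gauge B v) := ⟨_, rfl⟩
    have htt : t - t₀ = ε / (1 + gauge B v) := by rw [htdef]; ring
    have hd : 0 < ε / (1 + gauge B v) := div_pos hε hcpos
    have htgt : t₀ < t := by linarith
    have hmem : ξ ∈ t • B' := (memiff B' hB'open hB'conv hB'0 t (ht₀pos.trans htgt) ξ).1 htgt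
    have hmem2 : ξ - t • v ∈ t • B := (memtrans t ξ).1 hmem
    have h3 : gauge B (ξ - t • v) ≤ t := gauge_le_of_mem (ht₀pos.trans htgt).le hmem2
    have hsplit : ξ - t₀ • v = (ξ - t • v) + (t - t₀) • v := by
      rw [sub_smul]; abel
    have h4 : gauge B (ξ - t₀ • v) ≤ gauge B (ξ - t • v) + gauge B ((t - t₀) • v) := by
      rw [hsplit]; exact gauge_add_le hconv hBabs _ _
    have h5 : gauge B ((t - t₀) • v) = (t - t₀) * gauge B v := by
      rw [gauge_smul_of_nonneg (by linarith : (0:ℝ) ≤ t - t₀), smul_eq_mul]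
    have h7 : (t - t₀) * (1 + gauge B v) = ε := by
      rw [htt]; field_simp
    have h7' : (t - t₀) + (t - t₀) * gauge B v = ε := by rw [← h7]; ring
    linarith
  -- the key equation, ≥ direction
  have hge : t₀ ≤ gauge B (ξ - t₀ • v) := by
    by_contra h
    push_neg at h
    have hmem : ξ - t₀ • v ∈ t₀ • B := (memiff B hopen hconv h0 t₀ ht₀pos _).1 h
    have hmem2 : ξ ∈ t₀ • B' := (memtrans t₀ ξ).2 hmem
    have : gauge B' ξ < t₀ := (memiff B' hB'open hB'conv hB'0 t₀ ht₀pos ξ).2 hmem2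
    exact lt_irrefl t₀ this
  have heq : gauge B (ξ - t₀ • v) = t₀ := le_antisymm hle hge
  refine ⟨ht₀pos, heq, ?_⟩
  -- uniqueness
  have hcv : gauge B (-v) < 1 := gauge_lt_one_of_mem_of_isOpen hopen hv
  have hcv0 : 0 ≤ gauge B (-v) := gauge_nonneg _
  have key : ∀ a b : ℝ, a < b → gauge B (ξ - a • v) = a → gauge B (ξ - b • v) = b → False := by
    intro a b hab ha hb
    have hsplit : ξ - b • v = (ξ - a • v) + (b - a) • (-v) := by
      rw [smul_neg, sub_smul]; abel
    have h1 : gauge B (ξ - b • v) ≤ gauge B (ξ - a • v) + gauge B ((b - a) • (-v)) := by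
      rw [hsplit]; exact gauge_add_le hconv hBabs _ _
    have h2 : gauge B ((b - a) • (-v)) = (b - a) * gauge B (-v) := by
      rw [gauge_smul_of_nonneg (by linarith : (0:ℝ) ≤ b - a), smul_eq_mul]
    rw [ha, hb, h2] at h1
    nlinarith
  intro t ht htE
  rcases lt_trichotomy t t₀ with h | h | h
  · exact absurd (key t t₀ h htE heq) not_false
  · exact h
  · exact absurd (key t₀ t h heq htE) not_false
end

section
/- Uniqueness of the Zermelo implicit equation: if F is a Minkowski norm and F(-v) < 1, then for each nonzero ξ the equation F(ξ - t v) = t has exactly one solution t > 0. -/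
open Set

/-- uniqueness for the Zermelo implicit equation: if `F` is the
gauge of an open bounded convex body `B ∋ 0` and `F (-v) < 1`, then for each
nonzero `ξ` the equation `F (ξ - t • v) = t` has exactly one solution `t > 0`. -/
theorem zermelo_implicit_equation_unique_solution
    {V : Type*} [NormedAddCommGroup V] [NormedSpace ℝ V] [FiniteDimensional ℝ V]
    (B : Set V) (v : V)
    (hopen : IsOpen B) (hbdd : Bornology.IsBounded B) (hconv : Convex ℝ B)
    (h0 : (0 : V) ∈ B) (hv : gauge B (-v) < 1) :
    ∀ ξ : V, ξ ≠ 0 → ∃! t : ℝ, 0 < t ∧ gauge B (ξ - t • v) = t := by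
  intro ξ hξ
  have hnhds : B ∈ nhds (0 : V) := hopen.mem_nhds h0
  have habs : Absorbent ℝ B := absorbent_nhds_zero hnhds
  have hvnb : Bornology.IsVonNBounded ℝ B := (NormedSpace.isVonNBounded_iff ℝ).2 hbdd
  set c := gauge B (-v) with hc
  have hc0 : 0 ≤ c := gauge_nonneg _
  set f : ℝ → ℝ := fun t => gauge B (ξ - t • v) - t with hf
  -- key monotonicity estimate
  have key : ∀ s t : ℝ, s ≤ t → f t ≤ f s + (t - s) * (c - 1) := by
    intro s t hst
    have h1 : gauge B (ξ - t • v) ≤ gauge B (ξ - s • v) + (t - s) * c := by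
      have : ξ - t • v = (ξ - s • v) + (t - s) • (-v) := by
        rw [smul_neg]; module
      rw [this]
      calc gauge B ((ξ - s • v) + (t - s) • (-v))
          ≤ gauge B (ξ - s • v) + gauge B ((t - s) • (-v)) :=
            gauge_add_le hconv habs _ _
        _ = gauge B (ξ - s • v) + (t - s) * c := by
            rw [gauge_smul_of_nonneg (by linarith : (0:ℝ) ≤ t - s), smul_eq_mul]
    simp only [hf]
    nlinarith
  have hstrict : StrictAnti f := by
    intro s t hst
    have := key s t hst.le
    nlinarith
  have hcont : Continuous f := by
    have : Continuous (gauge B) := continuous_gauge hconv hnhds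
    fun_prop
  have hf0 : 0 < f 0 := by
    simp only [hf, zero_smul, sub_zero]
    exact (gauge_pos habs hvnb).2 hξ
  -- find T with f T < 0
  obtain ⟨T, hT0, hTneg⟩ : ∃ T : ℝ, 0 < T ∧ f T < 0 := by
    set T := (f 0 + 1) / (1 - c) with hT
    have h1c : (0:ℝ) < 1 - c := by linarith
    have hT0 : 0 < T := div_pos (by linarith) h1c
    refine ⟨T, hT0, ?_⟩
    have := key 0 T hT0.le
    have hTc : T * (1 - c) = f 0 + 1 := div_mul_cancel₀ _ h1c.ne'
    nlinarith
  obtain ⟨t, ht, hft⟩ : ∃ t ∈ Set.Icc (0:ℝ) T, f t = 0 := by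
    obtain ⟨t, ht, hft⟩ := intermediate_value_Icc' (a := 0) (b := T) hT0.le
      hcont.continuousOn ⟨hTneg.le, hf0.le⟩
    exact ⟨t, ht, hft⟩
  have ht0 : 0 < t := by
    rcases lt_or_eq_of_le ht.1 with h | h
    · exact h
    · exfalso; rw [← h] at hft; linarith
  refine ⟨t, ⟨ht0, by simpa [hf, sub_eq_zero] using hft⟩, ?_⟩
  rintro s ⟨hs0, hs⟩
  have hfs : f s = 0 := by simp [hf, hs]
  by_contra hne
  rcases lt_or_gt_of_ne hne with h | h
  · have := hstrict h; rw [hfs, hft] at this; exact lt_irrefl _ this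
  · have := hstrict h; rw [hfs, hft] at this; exact lt_irrefl _ this
end

section
/- Let F be a smooth Minkowski norm on V, v ∈ V with F(-v) < 1, and F̃ its Zermelo deformation. Then at a point ξ with F(ξ) = 1 (so F̃(ξ + v) = 1), the differential of F̃ at ξ + v equals (1/(1 + d F_ξ(v))) · d F_ξ, i.e. ∂F̃/∂ξ_i evaluated at ξ + v equals (1 + v(F))^{-1} ∂F/∂ξ_i evaluated at ξ, where v(F) = Σ_r v^r ∂F/∂ξ_r(ξ). -/
open Set

/-- Gradient inequality for convex functions: `F y ≥ F x + dF_x (y - x)`. -/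
lemma convexOn_grad_ineq {E : Type*} [NormedAddCommGroup E] [NormedSpace ℝ E] {F : E → ℝ}
    (hconv : ConvexOn ℝ univ F) {x : E} (hd : DifferentiableAt ℝ F x) (y : E) :
    F x + fderiv ℝ F x (y - x) ≤ F y := by
  set g : ℝ → ℝ := fun t => F (x + t • (y - x)) with hg
  have hgc : ConvexOn ℝ univ g := by
    have h := hconv.comp_affineMap (AffineMap.lineMap x y : ℝ →ᵃ[ℝ] E)
    have he : (⇑(AffineMap.lineMap x y : ℝ →ᵃ[ℝ] E)) ⁻¹' univ = (univ : Set ℝ) := by simp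
    rw [he] at h
    have hgeq : g = F ∘ ⇑(AffineMap.lineMap x y : ℝ →ᵃ[ℝ] E) := by
      funext t
      simp [hg, Function.comp, AffineMap.lineMap_apply, vsub_eq_sub, vadd_eq_add, add_comm]
    rw [hgeq]; exact h
  have hgd : HasDerivAt g (fderiv ℝ F x (y - x)) 0 := by
    have h1 : HasDerivAt (fun t : ℝ => x + t • (y - x)) (y - x) 0 := by
      simpa using ((hasDerivAt_id (0 : ℝ)).smul_const (y - x)).const_add x
    have h0 : x + (0 : ℝ) • (y - x) = x := by simp
    have hF : HasFDerivAt F (fderiv ℝ F x) ((fun t : ℝ => x + t • (y - x)) 0) := by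
      simpa [h0] using hd.hasFDerivAt
    exact hF.comp_hasDerivAt 0 h1
  have hsl := hgc.le_slope_of_hasDerivAt (mem_univ (0 : ℝ)) (mem_univ (1 : ℝ)) one_pos hgd
  have : slope g 0 1 = g 1 - g 0 := by simp [slope]
  rw [this] at hsl
  have hg1 : g 1 = F y := by simp [hg]
  have hg0 : g 0 = F x := by simp [hg]
  rw [hg1, hg0] at hsl
  linarith

/-- first derivative of the Zermelo deformation. If `F` is a
smooth Minkowski norm on `ℝⁿ`, `v` satisfies `F (-v) < 1`, and `F̃` is the
Zermelo deformation of `F` by `v`, then at any `ξ` with `F ξ = 1` we have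
`d F̃_{ξ+v} = (1 + dF_ξ(v))⁻¹ • d F_ξ`. -/
theorem zermelo_first_derivative
    {n : ℕ} (F Ft : (Fin n → ℝ) → ℝ) (v : Fin n → ℝ)
    (hFsm : ContDiffOn ℝ (⊤ : ℕ∞) F {(0 : Fin n → ℝ)}ᶜ)
    (hhom : ∀ c : ℝ, 0 < c → ∀ ξ, F (c • ξ) = c * F ξ)
    (hpos : ∀ ξ : Fin n → ℝ, ξ ≠ 0 → 0 < F ξ)
    (hconv : ConvexOn ℝ univ F)
    (hv : F (-v) < 1)
    (hFtpos : ∀ ξ : Fin n → ℝ, ξ ≠ 0 → 0 < Ft ξ)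
    (hFteq : ∀ ξ : Fin n → ℝ, ξ ≠ 0 → Ft ξ = F (ξ - Ft ξ • v))
    (ξ : Fin n → ℝ) (hξ : F ξ = 1)
    (hFtdiff : DifferentiableAt ℝ Ft (ξ + v)) :
    fderiv ℝ Ft (ξ + v) = (1 + fderiv ℝ F ξ v)⁻¹ • fderiv ℝ F ξ := by
  classical
  have hF0 : F 0 = 0 := by
    have h := hhom 2 (by norm_num) 0
    simp only [smul_zero] at h
    linarith
  have hξ0 : ξ ≠ 0 := by
    rintro rfl
    rw [hF0] at hξ
    norm_num at hξ
  have hFdiff : ∀ x : Fin n → ℝ, x ≠ 0 → DifferentiableAt ℝ F x := fun x hx =>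
    (hFsm.contDiffAt (isOpen_compl_singleton.mem_nhds (by simpa using hx))).differentiableAt (by simp)
  -- subadditivity of F
  have hsub : ∀ a b : Fin n → ℝ, F (a + b) ≤ F a + F b := by
    intro a b
    have h2 : F (a + b) = 2 * F ((1/2 : ℝ) • a + (1/2 : ℝ) • b) := by
      rw [← hhom 2 (by norm_num)]
      congr 1
      rw [smul_add, smul_smul, smul_smul]
      norm_num
    have h3 := hconv.2 (mem_univ a) (mem_univ b) (by norm_num : (0:ℝ) ≤ 1/2)
      (by norm_num : (0:ℝ) ≤ 1/2) (by norm_num)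
    simp only [smul_eq_mul] at h3
    linarith
  -- key positivity
  have hkey : ∀ x : Fin n → ℝ, x ≠ 0 → 0 < 1 + fderiv ℝ F x v := by
    intro x hx
    have h1 := convexOn_grad_ineq hconv (hFdiff x hx) (x - v)
    have h2 : F (x - v) ≤ F x + F (-v) := by
      simpa [sub_eq_add_neg] using hsub x (-v)
    have h3 : fderiv ℝ F x (x - v - x) = - fderiv ℝ F x v := by
      have : x - v - x = -v := by module
      rw [this, map_neg]
    rw [h3] at h1
    linarith
  have hξv0 : ξ + v ≠ 0 := by
    intro h
    have hxv : ξ = -v := eq_neg_of_add_eq_zero_left h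
    rw [hxv] at hξ
    linarith
  set t := Ft (ξ + v) with ht
  have htpos : 0 < t := hFtpos _ hξv0
  have hteq : t = F ((ξ + v) - t • v) := hFteq _ hξv0
  set s := 1 - t with hs
  have harg : (ξ + v) - t • v = ξ + s • v := by rw [hs]; module
  rw [harg] at hteq
  have hxs0 : ξ + s • v ≠ 0 := by
    intro h
    rw [h, hF0] at hteq
    linarith
  have hge : 0 ≤ s := by
    have h1 := convexOn_grad_ineq hconv (hFdiff _ hxs0) ξ
    have h2 : ξ - (ξ + s • v) = (-s) • v := by module
    rw [h2, map_smul, ← hteq, hξ, smul_eq_mul] at h1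
    have hk := hkey _ hxs0
    nlinarith
  have hle : s ≤ 0 := by
    have h1 := convexOn_grad_ineq hconv (hFdiff ξ hξ0) (ξ + s • v)
    have h2 : (ξ + s • v) - ξ = s • v := by module
    rw [h2, map_smul, ← hteq, hξ, smul_eq_mul] at h1
    have hk := hkey ξ hξ0
    nlinarith
  have ht1 : t = 1 := by
    have : s = 0 := le_antisymm hle hge
    rw [hs] at this; linarith
  -- implicit differentiation
  set A := fderiv ℝ Ft (ξ + v) with hA
  have hG : HasFDerivAt (fun η => η - Ft η • v)
      (ContinuousLinearMap.id ℝ (Fin n → ℝ) - A.smulRight v) (ξ + v) :=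
    (hasFDerivAt_id _).sub (hFtdiff.hasFDerivAt.smul_const v)
  have hGval : (ξ + v) - Ft (ξ + v) • v = ξ := by rw [← ht, ht1]; module
  have hFd : DifferentiableAt ℝ F ξ := hFdiff ξ hξ0
  have hcomp : HasFDerivAt (fun η => F (η - Ft η • v))
      ((fderiv ℝ F ξ).comp (ContinuousLinearMap.id ℝ (Fin n → ℝ) - A.smulRight v)) (ξ + v) := by
    have hF' : HasFDerivAt F (fderiv ℝ F ξ) ((fun η => η - Ft η • v) (ξ + v)) := by
      simpa [hGval] using hFd.hasFDerivAt
    exact hF'.comp (ξ + v) hG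
  have heq : Ft =ᶠ[nhds (ξ + v)] fun η => F (η - Ft η • v) := by
    filter_upwards [isOpen_compl_singleton.mem_nhds (by simpa using hξv0)] with η hη
    exact hFteq η (by simpa using hη)
  have hAeq : A = (fderiv ℝ F ξ).comp (ContinuousLinearMap.id ℝ (Fin n → ℝ) - A.smulRight v) :=
    heq.fderiv_eq.trans hcomp.fderiv
  have hk := hkey ξ hξ0
  have hne : (1 + fderiv ℝ F ξ v) ≠ 0 := ne_of_gt hk
  ext w
  have hw := ContinuousLinearMap.ext_iff.mp hAeq w
  simp only [ContinuousLinearMap.comp_apply, ContinuousLinearMap.sub_apply,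
    ContinuousLinearMap.id_apply, ContinuousLinearMap.smulRight_apply, map_sub, map_smul,
    smul_eq_mul] at hw
  simp only [ContinuousLinearMap.smul_apply, smul_eq_mul]
  field_simp
  linear_combination hw
end

section
/- Conformality on the tangent hyperplane: let F be a smooth Minkowski norm, F(-v) < 1, F̃ its Zermelo deformation, ξ with F(ξ) = 1, and J ∈ V with dF_ξ(J) = 0. Then g̃_{ξ+v}(J, J) = (1/(1 + dF_ξ(v))) · g_ξ(J, J). That is, restricted to vectors tangent to the indicatrix, the fundamental form of F̃ at ξ+v is the fundamental form of F at ξ scaled by (1+v(F))^{-1}. -/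
open Set
open Filter Topology

/-- Fiber Hessian of `F` at `ξ` in the directions `U`, `W`. -/
noncomputable def fiberHess {n : ℕ} (F : (Fin n → ℝ) → ℝ)
    (ξ U W : Fin n → ℝ) : ℝ :=
  fderiv ℝ (fun η => fderiv ℝ F η U) ξ W

/-- The fundamental form `g_ξ := (1/2) d²(F²)_ξ` of `F` at `ξ`. -/
noncomputable def fundForm {n : ℕ} (F : (Fin n → ℝ) → ℝ)
    (ξ U W : Fin n → ℝ) : ℝ :=
  (1 / 2) * fiberHess (fun ζ => (F ζ) ^ 2) ξ U W


lemma zcth_F_zero {n : ℕ} {F : (Fin n → ℝ) → ℝ}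
    (hhom : ∀ c : ℝ, 0 < c → ∀ ξ, F (c • ξ) = c * F ξ) : F 0 = 0 := by
  have h := hhom 2 (by norm_num) 0
  simp only [smul_zero] at h
  linarith

lemma zcth_euler {n : ℕ} {F : (Fin n → ℝ) → ℝ}
    (hFsm : ContDiffOn ℝ (⊤ : ℕ∞) F {(0 : Fin n → ℝ)}ᶜ)
    (hhom : ∀ c : ℝ, 0 < c → ∀ ξ, F (c • ξ) = c * F ξ)
    {η : Fin n → ℝ} (hη : η ≠ 0) : fderiv ℝ F η η = F η := by
  have hopen : IsOpen ({(0 : Fin n → ℝ)}ᶜ) := isOpen_compl_singleton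
  have hd : DifferentiableAt ℝ F η :=
    ((hFsm.contDiffAt (hopen.mem_nhds hη)).differentiableAt (by simp))
  have hc : HasDerivAt (fun c : ℝ => c • η) η 1 := by
    simpa using (hasDerivAt_id (1:ℝ)).smul_const η
  have h1 : HasDerivAt (fun c : ℝ => F (c • η)) (fderiv ℝ F η η) 1 := by
    have hd' : HasFDerivAt F (fderiv ℝ F η) ((1:ℝ) • η) := by
      simpa using hd.hasFDerivAt
    simpa [Function.comp_def] using hd'.comp_hasDerivAt 1 hc
  have h2 : (fun c : ℝ => F (c • η)) =ᶠ[𝓝 (1:ℝ)] fun c => c * F η := by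
    filter_upwards [eventually_gt_nhds zero_lt_one] with c hc
    exact hhom c hc η
  have h3 : HasDerivAt (fun c : ℝ => c * F η) (fderiv ℝ F η η) 1 :=
    h1.congr_of_eventuallyEq h2.symm
  have h4 : HasDerivAt (fun c : ℝ => c * F η) (F η) 1 := by
    simpa using (hasDerivAt_id (1:ℝ)).mul_const (F η)
  exact h3.unique h4

lemma zcth_value_one {n : ℕ} (F Ft : (Fin n → ℝ) → ℝ) (v : Fin n → ℝ)
    (hFsm : ContDiffOn ℝ (⊤ : ℕ∞) F {(0 : Fin n → ℝ)}ᶜ)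
    (hFtsm : ContDiffOn ℝ (⊤ : ℕ∞) Ft {(0 : Fin n → ℝ)}ᶜ)
    (hhom : ∀ c : ℝ, 0 < c → ∀ ξ, F (c • ξ) = c * F ξ)
    (hpos : ∀ ξ : Fin n → ℝ, ξ ≠ 0 → 0 < F ξ)
    (hv : F (-v) < 1)
    (hFtpos : ∀ ξ : Fin n → ℝ, ξ ≠ 0 → 0 < Ft ξ)
    (hFteq : ∀ ξ : Fin n → ℝ, ξ ≠ 0 → Ft ξ = F (ξ - Ft ξ • v))
    (ξ : Fin n → ℝ) (hξ : F ξ = 1) (hξ0 : ξ ≠ 0) (hζ0 : ξ + v ≠ 0) :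
    Ft (ξ + v) = 1 := by
  have hopen : IsOpen ({(0 : Fin n → ℝ)}ᶜ) := isOpen_compl_singleton
  have hF0 : F 0 = 0 := zcth_F_zero hhom
  by_cases hv0 : v = 0
  · rw [hFteq _ hζ0]
    simp [hv0, hξ]
  -- v ≠ 0
  have hmpos : 0 < F (-v) := hpos _ (neg_ne_zero.mpr hv0)
  by_cases hcol : ∃ r : ℝ, ξ = r • v
  · -- collinear case
    obtain ⟨r, hr⟩ := hcol
    have hr0 : r ≠ 0 := by rintro rfl; rw [zero_smul] at hr; exact hξ0 hr
    set t := Ft (ξ + v) with ht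
    have htpos : 0 < t := hFtpos _ hζ0
    have heq : t = F ((r + 1 - t) • v) := by
      calc t = F (ξ + v - t • v) := hFteq _ hζ0
        _ = F ((r + 1 - t) • v) := by rw [hr]; congr 1; module
    rcases lt_trichotomy (r + 1 - t) 0 with hcase | hcase | hcase
    · have h2 : F ((r + 1 - t) • v) = (t - r - 1) * F (-v) := by
        rw [show (r + 1 - t) • v = (t - r - 1) • (-v) by module]
        exact hhom _ (by linarith) (-v)
      rw [h2] at heq
      rcases lt_trichotomy r 0 with hrneg | h | hrpos
      · have hFξ : 1 = (-r) * F (-v) := by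
          rw [← hξ, hr, show r • v = (-r) • (-v) by module, hhom (-r) (by linarith) (-v)]
        have hfin : t * (1 - F (-v)) = 1 * (1 - F (-v)) := by linear_combination heq - hFξ
        exact mul_right_cancel₀ (by intro h; rw [sub_eq_zero] at h; exact absurd h.symm (ne_of_lt hv)) hfin
      · exact absurd h hr0
      · nlinarith [mul_pos (show (0:ℝ) < t - r - 1 by linarith) (show (0:ℝ) < 1 - F (-v) by linarith)]
    · rw [show (r + 1 - t) = 0 from hcase, zero_smul, hF0] at heq
      linarith
    · have h2 : F ((r + 1 - t) • v) = (r + 1 - t) * F v := hhom _ hcase v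
      rw [h2] at heq
      rcases lt_trichotomy r 0 with hrneg | h | hrpos
      · have hFξ : 1 = (-r) * F (-v) := by
          rw [← hξ, hr, show r • v = (-r) • (-v) by module, hhom (-r) (by linarith) (-v)]
        nlinarith [mul_lt_mul_of_pos_left hv (show (0:ℝ) < -r by linarith)]
      · exact absurd h hr0
      · have hFv : 1 = r * F v := by rw [← hξ, hr, hhom r hrpos v]
        have hfin : t * (r + 1) = 1 * (r + 1) := by
          linear_combination r * heq - (r + 1 - t) * hFv
        exact mul_right_cancel₀ (by positivity) hfin
  · -- non-collinear case: the line ξ + s v avoids 0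
    have hline : ∀ s : ℝ, ξ + s • v ≠ 0 := by
      intro s h
      exact hcol ⟨-s, by rw [neg_smul, ← sub_eq_zero]; simpa [sub_eq_add_neg] using h⟩
    set m := F (-v) with hm
    set m' := (1 + m) / 2 with hm'
    have hm'lt : m' < 1 := by rw [hm']; linarith
    have hm'pos : 0 < m' := by rw [hm']; linarith
    -- continuity of F at -v
    have hFct : ContinuousAt F (-v) :=
      hFsm.continuousOn.continuousAt (hopen.mem_nhds (neg_ne_zero.mpr hv0))
    obtain ⟨δ, hδ, hδball⟩ := Metric.continuousAt_iff.mp hFct ((1 - m) / 2) (by linarith)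
    set c₁ : ℝ := ‖ξ‖ / δ + 1 with hc₁
    have hc₁pos : 0 < c₁ := by positivity
    have hfar : ∀ c : ℝ, c₁ ≤ c → F (ξ - c • v) ≤ c * m' := by
      intro c hc
      have hcpos : 0 < c := lt_of_lt_of_le hc₁pos hc
      have h1 : ξ - c • v = c • (c⁻¹ • ξ - v) := by
        rw [smul_sub, smul_smul, mul_inv_cancel₀ (ne_of_gt hcpos), one_smul]
      have hdist : dist (c⁻¹ • ξ - v) (-v) < δ := by
        rw [dist_eq_norm]
        have : c⁻¹ • ξ - v - -v = c⁻¹ • ξ := by abel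
        rw [this, norm_smul]
        simp only [norm_inv, Real.norm_eq_abs, abs_of_pos hcpos]
        rw [inv_mul_lt_iff₀ hcpos]
        calc ‖ξ‖ < δ * c₁ := by
              rw [hc₁, mul_add, mul_one, mul_div_cancel₀ _ (ne_of_gt hδ)]; linarith
          _ ≤ δ * c := by nlinarith
          _ = c * δ := mul_comm _ _
      have hFlt : F (c⁻¹ • ξ - v) ≤ m' := by
        have := hδball hdist
        rw [Real.dist_eq] at this
        have := abs_lt.mp this
        rw [hm']; linarith [this.2]
      calc F (ξ - c • v) = c * F (c⁻¹ • ξ - v) := by rw [h1, hhom c hcpos]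
        _ ≤ c * m' := by nlinarith
    -- bound on the compact part
    have hlinecont : Continuous fun c : ℝ => F (ξ - c • v) := by
      rw [continuous_iff_continuousAt]
      intro c
      have h1 : ContinuousAt F (ξ - c • v) := by
        apply hFsm.continuousOn.continuousAt (hopen.mem_nhds _)
        have := hline (-c)
        simpa [sub_eq_add_neg, neg_smul] using this
      exact ContinuousAt.comp h1 (show ContinuousAt (fun c : ℝ => ξ - c • v) c by fun_prop)
    obtain ⟨cm, hcmmem, hcmax'⟩ := isCompact_Icc.exists_isMaxOn
      (Set.nonempty_Icc.mpr (le_of_lt hc₁pos))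
      (hlinecont.continuousOn : ContinuousOn (fun c : ℝ => F (ξ - c • v)) (Icc 0 c₁))
    have hcmax : ∀ c ∈ Icc (0:ℝ) c₁, F (ξ - c • v) ≤ F (ξ - cm • v) := fun c hc => hcmax' hc
    set M := F (ξ - cm • v) with hM
    have hM1 : 1 ≤ M := by
      have := hcmax 0 ⟨le_refl _, le_of_lt hc₁pos⟩
      simpa [hξ] using this
    have hbound : ∀ c : ℝ, 0 ≤ c → F (ξ - c • v) ≤ M + c * m' := by
      intro c hc
      rcases le_or_gt c c₁ with h | h
      · have := hcmax c ⟨hc, h⟩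
        nlinarith
      · have := hfar c (le_of_lt h)
        nlinarith
    -- the function t s = Ft (ξ + s v)
    set t : ℝ → ℝ := fun s => Ft (ξ + s • v) with htdef
    have htpos : ∀ s, 0 < t s := fun s => hFtpos _ (hline s)
    have hkey : ∀ s : ℝ, (s - t s) + F (ξ + (s - t s) • v) = s := by
      intro s
      have h := hFteq _ (hline s)
      have h2 : ξ + s • v - Ft (ξ + s • v) • v = ξ + (s - t s) • v := by
        rw [htdef]; module
      rw [h2] at h
      rw [htdef] at h ⊢
      linarith [h]
    have htcont : Continuous t := by
      rw [continuous_iff_continuousAt]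
      intro s
      exact ContinuousAt.comp (hFtsm.continuousOn.continuousAt (hopen.mem_nhds (hline s)))
        (show ContinuousAt (fun s : ℝ => ξ + s • v) s by fun_prop)
    set S : ℝ := M / (1 - m') + 1 with hS
    have hSpos : 0 < S := by
      have h : 0 < M / (1 - m') := by apply div_pos (by linarith) (by linarith)
      rw [hS]; linarith
    have hUS : 0 ≤ S - t S := by
      by_contra hcon
      push_neg at hcon
      have hc : 0 ≤ t S - S := by linarith
      have h1 : F (ξ + (S - t S) • v) = t S := by
        have := hkey S; linarith
      have h2 : ξ + (S - t S) • v = ξ - (t S - S) • v := by module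
      have h3 : t S ≤ M + (t S - S) * m' := by
        have h3' := hbound (t S - S) hc
        rw [← h2, h1] at h3'
        exact h3'
      have h4 : t S * (1 - m') ≤ M - S * m' := by nlinarith
      have h5 : S * (1 - m') ≤ M := by nlinarith
      rw [hS] at h5
      have h6 : M / (1 - m') * (1 - m') = M := div_mul_cancel₀ _ (by linarith)
      nlinarith
    -- intermediate value
    have hu0 : (0:ℝ) - t 0 < 0 := by have := htpos 0; linarith
    have hIVT := intermediate_value_Icc (le_of_lt hSpos)
      ((continuous_id.sub htcont).continuousOn : ContinuousOn (fun s : ℝ => s - t s) (Icc 0 S))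
    have h0mem : (0:ℝ) ∈ Icc ((fun s : ℝ => s - t s) 0) ((fun s : ℝ => s - t s) S) := by
      constructor
      · simpa using le_of_lt hu0
      · simpa using hUS
    obtain ⟨s₀, hs₀mem, hs₀⟩ := hIVT h0mem
    simp only [Pi.sub_apply, id_eq] at hs₀
    have hts₀ : t s₀ = s₀ := by linarith
    have hs₀1 : s₀ = 1 := by
      have h := hkey s₀
      rw [show s₀ - t s₀ = 0 by linarith] at h
      simp only [zero_smul, add_zero, zero_add, hξ] at h
      linarith
    have hfin : Ft (ξ + s₀ • v) = s₀ := hts₀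
    rw [hs₀1] at hfin
    simpa using hfin


/-- conformality on the tangent hyperplane: if `F ξ = 1` and
`dF_ξ(J) = 0`, then `g̃_{ξ+v}(J,J) = (1 + dF_ξ(v))⁻¹ · g_ξ(J,J)`. -/
theorem zermelo_conformality_on_tangent_hyperplane
    {n : ℕ} (F Ft : (Fin n → ℝ) → ℝ) (v : Fin n → ℝ)
    (hFsm : ContDiffOn ℝ (⊤ : ℕ∞) F {(0 : Fin n → ℝ)}ᶜ)
    (hFtsm : ContDiffOn ℝ (⊤ : ℕ∞) Ft {(0 : Fin n → ℝ)}ᶜ)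
    (hhom : ∀ c : ℝ, 0 < c → ∀ ξ, F (c • ξ) = c * F ξ)
    (hpos : ∀ ξ : Fin n → ℝ, ξ ≠ 0 → 0 < F ξ)
    (hv : F (-v) < 1)
    (hFtpos : ∀ ξ : Fin n → ℝ, ξ ≠ 0 → 0 < Ft ξ)
    (hFteq : ∀ ξ : Fin n → ℝ, ξ ≠ 0 → Ft ξ = F (ξ - Ft ξ • v))
    (ξ : Fin n → ℝ) (hξ : F ξ = 1)
    (J : Fin n → ℝ) (hJ : fderiv ℝ F ξ J = 0) :
    fundForm Ft (ξ + v) J J = (1 + fderiv ℝ F ξ v)⁻¹ * fundForm F ξ J J := by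
  have hopen : IsOpen ({(0 : Fin n → ℝ)}ᶜ) := isOpen_compl_singleton
  have hF0 : F 0 = 0 := zcth_F_zero hhom
  have hξ0 : ξ ≠ 0 := by rintro rfl; rw [hF0] at hξ; exact one_ne_zero hξ.symm
  have hζ0 : ξ + v ≠ 0 := by
    intro h
    have : -v = ξ := by rw [← sub_eq_zero]; rw [show -v - ξ = -(ξ + v) by abel, h, neg_zero]
    rw [this, hξ] at hv; exact lt_irrefl 1 hv
  have hone : Ft (ξ + v) = 1 :=
    zcth_value_one F Ft v hFsm hFtsm hhom hpos hv hFtpos hFteq ξ hξ hξ0 hζ0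
  have hW0 : ξ + v - Ft (ξ + v) • v = ξ := by rw [hone, one_smul]; abel
  -- contDiffAt facts
  have hF_at : ∀ {η : Fin n → ℝ}, η ≠ 0 → ContDiffAt ℝ (⊤ : ℕ∞) F η :=
    fun {η} hη => hFsm.contDiffAt (hopen.mem_nhds hη)
  have hFt_at : ∀ {η : Fin n → ℝ}, η ≠ 0 → ContDiffAt ℝ (⊤ : ℕ∞) Ft η :=
    fun {η} hη => hFtsm.contDiffAt (hopen.mem_nhds hη)
  -- the basic first-derivative relation
  have rel : ∀ ζ : Fin n → ℝ, ζ ≠ 0 → ζ - Ft ζ • v ≠ 0 → ∀ U : Fin n → ℝ,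
      fderiv ℝ Ft ζ U * (1 + fderiv ℝ F (ζ - Ft ζ • v) v)
        = fderiv ℝ F (ζ - Ft ζ • v) U := by
    intro ζ hζ hWζ U
    have hFtd : HasFDerivAt Ft (fderiv ℝ Ft ζ) ζ :=
      ((hFt_at hζ).differentiableAt (by simp)).hasFDerivAt
    have hWd : HasFDerivAt (fun x => x - Ft x • v)
        (ContinuousLinearMap.id ℝ (Fin n → ℝ) - (fderiv ℝ Ft ζ).smulRight v) ζ :=
      (hasFDerivAt_id ζ).sub (hFtd.smul_const v)
    have hFd : HasFDerivAt F (fderiv ℝ F (ζ - Ft ζ • v)) (ζ - Ft ζ • v) :=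
      ((hF_at hWζ).differentiableAt (by simp)).hasFDerivAt
    have hcomp : HasFDerivAt (fun x => F (x - Ft x • v))
        ((fderiv ℝ F (ζ - Ft ζ • v)).comp
          (ContinuousLinearMap.id ℝ (Fin n → ℝ) - (fderiv ℝ Ft ζ).smulRight v)) ζ :=
      hFd.comp ζ hWd
    have heq : Ft =ᶠ[𝓝 ζ] fun x => F (x - Ft x • v) := by
      filter_upwards [hopen.mem_nhds hζ] with x hx
      exact hFteq x hx
    have hFtd2 : HasFDerivAt Ft ((fderiv ℝ F (ζ - Ft ζ • v)).comp
        (ContinuousLinearMap.id ℝ (Fin n → ℝ) - (fderiv ℝ Ft ζ).smulRight v)) ζ :=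
      hcomp.congr_of_eventuallyEq heq
    have huniq := hFtd.unique hFtd2
    have happ := DFunLike.congr_fun huniq U
    simp only [ContinuousLinearMap.coe_comp', Function.comp_apply,
      ContinuousLinearMap.coe_sub', Pi.sub_apply, ContinuousLinearMap.coe_id', id_eq,
      ContinuousLinearMap.smulRight_apply, map_sub, map_smul, smul_eq_mul] at happ
    -- happ : fderiv ℝ Ft ζ U = fderiv ℝ F (ζ - Ft ζ • v) U - fderiv ℝ Ft ζ U * fderiv ℝ F (ζ - Ft ζ • v) v
    ring_nf
    ring_nf at happ
    linarith [happ]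
  -- nondegeneracy
  have hnd : ∀ ζ : Fin n → ℝ, ζ ≠ 0 → ζ - Ft ζ • v ≠ 0 →
      1 + fderiv ℝ F (ζ - Ft ζ • v) v ≠ 0 := by
    intro ζ hζ hWζ h0
    have h1 := rel ζ hζ hWζ (ζ - Ft ζ • v)
    rw [h0, mul_zero] at h1
    rw [zcth_euler hFsm hhom hWζ, ← hFteq ζ hζ] at h1
    exact absurd h1.symm (ne_of_gt (hFtpos ζ hζ))
  have hden : 1 + fderiv ℝ F ξ v ≠ 0 := by
    have := hnd (ξ + v) hζ0 (by rw [hW0]; exact hξ0)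
    rwa [hW0] at this
  have hpJ : fderiv ℝ Ft (ξ + v) J = 0 := by
    have h := rel (ξ + v) hζ0 (by rw [hW0]; exact hξ0) J
    rw [hW0, hJ] at h
    exact (mul_eq_zero.mp h).resolve_right hden
  -- second derivative infrastructure
  have hFtd0 : HasFDerivAt Ft (fderiv ℝ Ft (ξ + v)) (ξ + v) :=
    ((hFt_at hζ0).differentiableAt (by simp)).hasFDerivAt
  set D := fderiv ℝ Ft (ξ + v) with hD
  set DW := ContinuousLinearMap.id ℝ (Fin n → ℝ) - D.smulRight v with hDW
  have hWd0 : HasFDerivAt (fun x => x - Ft x • v) DW (ξ + v) :=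
    (hasFDerivAt_id (ξ + v)).sub (hFtd0.smul_const v)
  have hDWJ : DW J = J := by
    rw [hDW]
    simp [hpJ]
  have hFcd : ContDiffAt ℝ (⊤ : ℕ∞) (fderiv ℝ F) ξ := (hF_at hξ0).fderiv_right (by simp)
  have houterJ : HasFDerivAt (fun w => fderiv ℝ F w J)
      (fderiv ℝ (fun w => fderiv ℝ F w J) ξ) ξ :=
    (((hFcd.clm_apply contDiffAt_const)).differentiableAt (by simp)).hasFDerivAt
  have houterv : HasFDerivAt (fun w => fderiv ℝ F w v)
      (fderiv ℝ (fun w => fderiv ℝ F w v) ξ) ξ :=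
    (((hFcd.clm_apply contDiffAt_const)).differentiableAt (by simp)).hasFDerivAt
  set B := fderiv ℝ (fun w => fderiv ℝ F w J) ξ with hB
  set Bv := fderiv ℝ (fun w => fderiv ℝ F w v) ξ with hBv
  have houterJ' : HasFDerivAt (fun w => fderiv ℝ F w J) B (ξ + v - Ft (ξ + v) • v) :=
    hW0.symm ▸ houterJ
  have houterv' : HasFDerivAt (fun w => fderiv ℝ F w v) Bv (ξ + v - Ft (ξ + v) • v) :=
    hW0.symm ▸ houterv
  have hg_d : HasFDerivAt (fun x => fderiv ℝ F (x - Ft x • v) J) (B.comp DW) (ξ + v) :=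
    (houterJ'.comp (ξ + v) hWd0 :)
  have hG_d : HasFDerivAt (fun x => fderiv ℝ F (x - Ft x • v) v) (Bv.comp DW) (ξ + v) :=
    (houterv'.comp (ξ + v) hWd0 :)
  have hf_cd : ContDiffAt ℝ (⊤ : ℕ∞) (fun x => fderiv ℝ Ft x J) (ξ + v) :=
    ((hFt_at hζ0).fderiv_right (by simp)).clm_apply contDiffAt_const
  set Df := fderiv ℝ (fun x => fderiv ℝ Ft x J) (ξ + v) with hDf
  have hf_d : HasFDerivAt (fun x => fderiv ℝ Ft x J) Df (ξ + v) :=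
    (hf_cd.differentiableAt (by simp)).hasFDerivAt
  -- eventual first-derivative identity
  have hWev : ∀ᶠ x in 𝓝 (ξ + v), x - Ft x • v ≠ 0 := by
    have hWc : ContinuousAt (fun x => x - Ft x • v) (ξ + v) := hWd0.continuousAt
    have : (fun x => x - Ft x • v) (ξ + v) ≠ 0 := by simpa [hW0] using hξ0
    exact hWc.eventually_ne this
  have hevA : (fun x => fderiv ℝ Ft x J * (1 + fderiv ℝ F (x - Ft x • v) v))
      =ᶠ[𝓝 (ξ + v)] fun x => fderiv ℝ F (x - Ft x • v) J := by
    filter_upwards [hopen.mem_nhds hζ0, hWev] with x hx1 hx2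
    exact rel x hx1 hx2 J
  have h1G : HasFDerivAt (fun x => 1 + fderiv ℝ F (x - Ft x • v) v) (Bv.comp DW) (ξ + v) :=
    hG_d.const_add 1
  have hmulL := hf_d.fun_mul h1G
  have hEq : fderiv ℝ (fun x => fderiv ℝ Ft x J * (1 + fderiv ℝ F (x - Ft x • v) v)) (ξ + v)
      = fderiv ℝ (fun x => fderiv ℝ F (x - Ft x • v) J) (ξ + v) := hevA.fderiv_eq
  rw [hmulL.fderiv, hg_d.fderiv] at hEq
  have hEqJ := DFunLike.congr_fun hEq J
  rw [hW0] at hEqJ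
  rw [← hD] at hEqJ
  simp only [ContinuousLinearMap.add_apply, ContinuousLinearMap.coe_smul', Pi.smul_apply,
    smul_eq_mul, ContinuousLinearMap.coe_comp', Function.comp_apply, hDWJ, hpJ,
    zero_mul, zero_add] at hEqJ
  -- hEqJ : (1 + fderiv ℝ F ξ v) * Df J = B J
  -- LHS fundamental form
  have hLHS : fundForm Ft (ξ + v) J J = Df J := by
    unfold fundForm fiberHess
    have hevFt2 : (fun x => fderiv ℝ (fun y => Ft y ^ 2) x J)
        =ᶠ[𝓝 (ξ + v)] fun x => 2 * Ft x * fderiv ℝ Ft x J := by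
      filter_upwards [hopen.mem_nhds hζ0] with x hx
      have hd : HasFDerivAt Ft (fderiv ℝ Ft x) x :=
        ((hFt_at hx).differentiableAt (by simp)).hasFDerivAt
      have hp : HasFDerivAt (fun y => Ft y ^ 2)
          (Ft x • fderiv ℝ Ft x + Ft x • fderiv ℝ Ft x) x := by
        simpa only [pow_two] using hd.fun_mul hd
      rw [hp.fderiv]
      simp only [ContinuousLinearMap.add_apply, ContinuousLinearMap.coe_smul', Pi.smul_apply,
        smul_eq_mul]
      ring
    rw [show fderiv ℝ (fun x => fderiv ℝ (fun y => Ft y ^ 2) x J) (ξ + v)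
      = fderiv ℝ (fun x => 2 * Ft x * fderiv ℝ Ft x J) (ξ + v) from hevFt2.fderiv_eq]
    have hc : HasFDerivAt (fun x => 2 * Ft x) ((2:ℝ) • D) (ξ + v) := hFtd0.const_mul 2
    have hprod := hc.fun_mul hf_d
    rw [hprod.fderiv]
    simp only [ContinuousLinearMap.add_apply, ContinuousLinearMap.coe_smul', Pi.smul_apply,
      smul_eq_mul, hone, hpJ, mul_one, zero_mul, add_zero]
    ring
  -- RHS fundamental form
  have hRHS : fundForm F ξ J J = B J := by
    unfold fundForm fiberHess
    have hFd0 : HasFDerivAt F (fderiv ℝ F ξ) ξ :=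
      ((hF_at hξ0).differentiableAt (by simp)).hasFDerivAt
    have hevF2 : (fun x => fderiv ℝ (fun y => F y ^ 2) x J)
        =ᶠ[𝓝 ξ] fun x => 2 * F x * fderiv ℝ F x J := by
      filter_upwards [hopen.mem_nhds hξ0] with x hx
      have hd : HasFDerivAt F (fderiv ℝ F x) x :=
        ((hF_at hx).differentiableAt (by simp)).hasFDerivAt
      have hp : HasFDerivAt (fun y => F y ^ 2)
          (F x • fderiv ℝ F x + F x • fderiv ℝ F x) x := by
        simpa only [pow_two] using hd.fun_mul hd
      rw [hp.fderiv]
      simp only [ContinuousLinearMap.add_apply, ContinuousLinearMap.coe_smul', Pi.smul_apply,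
        smul_eq_mul]
      ring
    rw [show fderiv ℝ (fun x => fderiv ℝ (fun y => F y ^ 2) x J) ξ
      = fderiv ℝ (fun x => 2 * F x * fderiv ℝ F x J) ξ from hevF2.fderiv_eq]
    have hc : HasFDerivAt (fun x => 2 * F x) ((2:ℝ) • fderiv ℝ F ξ) ξ := hFd0.const_mul 2
    have hprod := hc.fun_mul houterJ
    rw [hprod.fderiv]
    simp only [ContinuousLinearMap.add_apply, ContinuousLinearMap.coe_smul', Pi.smul_apply,
      smul_eq_mul, hξ, hJ, mul_one, zero_mul, add_zero]
    ring
  rw [hLHS, hRHS, ← hEqJ]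
  rw [inv_mul_cancel_left₀ hden]
end

section
/- Arc-length correspondence: let v be a Killing field of the Finsler metric F with F(x,-v(x)) < 1, Ψ_t its flow, and F̃ the Zermelo deformation. If x(t) is a curve with F(x(t), ẋ(t)) = 1 for all t, then the curve y(t) := Ψ_t(x(t)) satisfies F̃(y(t), ẏ(t)) = 1 for all t. -/
/-- arc-length correspondence. In a chart (base a real normed
space `E`), let `v` be a Killing field of the Finsler metric `F` with
`F x (-(v x)) < 1`, let `Ψ` be its flow, and let `F̃` be the Zermelo
deformation of `F` by `v` (whose unit sphere is the `v`-translate of the unit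
`F`-sphere).  If `x : ℝ → E` is a curve with `F (x t) (ẋ t) = 1` for all `t`,
then the curve `y t := Ψ t (x t)` satisfies `F̃ (y t) (ẏ t) = 1`. -/
theorem zermelo_arclength_correspondence
    {E : Type*} [NormedAddCommGroup E] [NormedSpace ℝ E]
    (F Ft : E → E → ℝ) (v : E → E) (Ψ : ℝ → E → E)
    (hΨsm : ContDiff ℝ (⊤ : ℕ∞) (fun p : ℝ × E => Ψ p.1 p.2))
    (hΨ0 : ∀ x : E, Ψ 0 x = x)
    (hflow : ∀ (t : ℝ) (x : E), HasDerivAt (fun s => Ψ s x) (v (Ψ t x)) t)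
    (hsmall : ∀ x : E, F x (-(v x)) < 1)
    (hKilling : ∀ (t : ℝ) (x ξ : E), F (Ψ t x) (fderiv ℝ (Ψ t) x ξ) = F x ξ)
    (hvequiv : ∀ (t : ℝ) (x : E), fderiv ℝ (Ψ t) x (v x) = v (Ψ t x))
    (hZermelo : ∀ (x ξ : E), F x ξ = 1 → Ft x (ξ + v x) = 1)
    (x : ℝ → E) (x' : ℝ → E)
    (hx : ∀ t : ℝ, HasDerivAt x (x' t) t)
    (hunit : ∀ t : ℝ, F (x t) (x' t) = 1) :
    ∀ t : ℝ, Ft (Ψ t (x t)) (deriv (fun s => Ψ s (x s)) t) = 1 := by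
  intro t
  have hfd : HasFDerivAt (fun q : ℝ × E => Ψ q.1 q.2)
      (fderiv ℝ (fun q : ℝ × E => Ψ q.1 q.2) (t, x t)) (t, x t) :=
    ((hΨsm.differentiable (by simp)) (t, x t)).hasFDerivAt
  set Df := fderiv ℝ (fun q : ℝ × E => Ψ q.1 q.2) (t, x t) with hDf
  have hxy : HasDerivAt (fun s => (s, x s)) ((1 : ℝ), x' t) t :=
    HasDerivAt.prodMk (hasDerivAt_id t) (hx t)
  have hy : HasDerivAt (fun s => Ψ s (x s)) (Df ((1 : ℝ), x' t)) t := by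
    exact hfd.comp_hasDerivAt t hxy
  have h1 : Df ((1 : ℝ), (0 : E)) = v (Ψ t (x t)) := by
    have hcurve : HasDerivAt (fun s : ℝ => (s, x t)) ((1 : ℝ), (0 : E)) t :=
      HasDerivAt.prodMk (hasDerivAt_id t) (hasDerivAt_const t (x t))
    have hc : HasDerivAt (fun s => Ψ s (x t)) (Df ((1 : ℝ), (0 : E))) t := by
      exact hfd.comp_hasDerivAt t hcurve
    exact hc.unique (hflow t (x t))
  have h2 : Df ((0 : ℝ), x' t) = fderiv ℝ (Ψ t) (x t) (x' t) := by
    have hc2 : HasFDerivAt (fun y : E => ((t : ℝ), y))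
        (((0 : E →L[ℝ] ℝ)).prod (ContinuousLinearMap.id ℝ E)) (x t) :=
      HasFDerivAt.prodMk (hasFDerivAt_const t (x t)) (hasFDerivAt_id (x t))
    have hcomp : HasFDerivAt (Ψ t)
        (Df.comp (((0 : E →L[ℝ] ℝ)).prod (ContinuousLinearMap.id ℝ E))) (x t) :=
      hfd.comp (x t) hc2
    rw [hcomp.fderiv]
    rfl
  have hsplit : Df ((1 : ℝ), x' t) = Df ((1 : ℝ), (0 : E)) + Df ((0 : ℝ), x' t) := by
    rw [← map_add]
    norm_num
  have hderiv : deriv (fun s => Ψ s (x s)) t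
      = fderiv ℝ (Ψ t) (x t) (x' t) + v (Ψ t (x t)) := by
    rw [hy.deriv, hsplit, h1, h2, add_comm]
  rw [hderiv]
  exact hZermelo _ _ (by rw [hKilling]; exact hunit t)
end
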